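/- For a pure-state GU ensemble (1/n, g|ψ⟩⟨ψ|g†)_{g∈G} generated by a unitary representation of a finite group G of order n, the pretty good measurement is optimal; i.e., the optimal success probability equals (1/n)[tr(ρ̄^{1/2})]², where ρ̄ = (1/n)Σ_g g|ψ⟩⟨ψ|g† is the average state. Specifically, K = (1/n)tr(ρ̄^{1/2})·ρ̄^{1/2} is dual-feasible (K ≥ (1/n)g|ψ⟩⟨ψ|g† for all g) with tr K = (1/n)[tr(ρ̄^{1/2})]². -/

import Mathlib

open scoped ComplexOrder

/-- Real power of a Hermitian matrix via the functional calculus. Junk value `0` for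
non-Hermitian matrices. -/
noncomputable def mpow {d : ℕ} (A : Matrix (Fin d) (Fin d) ℂ) (α : ℝ) :
    Matrix (Fin d) (Fin d) ℂ :=
  if h : A.IsHermitian then h.cfc (fun x => x ^ α) else 0

/-- Optimal success probability of discriminating the ensemble `(p i, ρ i)` by a POVM. -/
noncomputable def optSucc {ι H : Type*} [Fintype ι] [Fintype H] [DecidableEq H]
    (p : ι → ℝ) (ρ : ι → Matrix H H ℂ) : ℝ :=
  sSup {x : ℝ | ∃ M : ι → Matrix H H ℂ,
    (∀ i, (M i).PosSemidef) ∧ (∑ i, M i) = 1 ∧ x = ∑ i, p i * ((M i * ρ i).trace).re}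

section PGMAuxSection
open Matrix

namespace PGMAux

variable {d : ℕ} {A : Matrix (Fin d) (Fin d) ℂ}

lemma cfc_def (hA : A.IsHermitian) (f : ℝ → ℝ) :
    hA.cfc f = (hA.eigenvectorUnitary : Matrix (Fin d) (Fin d) ℂ) *
      diagonal (Complex.ofReal ∘ f ∘ hA.eigenvalues) *
      star (hA.eigenvectorUnitary : Matrix (Fin d) (Fin d) ℂ) := rfl

lemma star_mul_self_eigen (hA : A.IsHermitian) :
    star (hA.eigenvectorUnitary : Matrix (Fin d) (Fin d) ℂ) *
      (hA.eigenvectorUnitary : Matrix (Fin d) (Fin d) ℂ) = 1 :=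
  Unitary.star_mul_self_of_mem (SetLike.coe_mem _)

lemma mul_star_self_eigen (hA : A.IsHermitian) :
    (hA.eigenvectorUnitary : Matrix (Fin d) (Fin d) ℂ) *
      star (hA.eigenvectorUnitary : Matrix (Fin d) (Fin d) ℂ) = 1 :=
  Unitary.mul_star_self_of_mem (SetLike.coe_mem _)

lemma cfc_mul' (hA : A.IsHermitian) (f g : ℝ → ℝ) :
    hA.cfc f * hA.cfc g = hA.cfc (fun x => f x * g x) := by
  simp only [cfc_def]
  have h1 : ∀ {a b c e f : Matrix (Fin d) (Fin d) ℂ},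
      (a * b * c) * (a * e * f) = a * (b * (c * a) * e) * f := by
    intros; noncomm_ring
  rw [h1, star_mul_self_eigen hA, mul_one, diagonal_mul_diagonal]
  congr 2
  funext i
  simp [Function.comp_def]

lemma cfc_congr' (hA : A.IsHermitian) {f g : ℝ → ℝ}
    (h : ∀ i, f (hA.eigenvalues i) = g (hA.eigenvalues i)) : hA.cfc f = hA.cfc g := by
  have : (Complex.ofReal ∘ f ∘ hA.eigenvalues) = (Complex.ofReal ∘ g ∘ hA.eigenvalues) := by
    funext i; simp [h i]
  simp only [cfc_def, this]

lemma cfc_id' (hA : A.IsHermitian) : hA.cfc (fun x => x) = A := by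
  rw [cfc_def]; exact (hA.spectral_theorem).symm

lemma cfc_one' (hA : A.IsHermitian) : hA.cfc (fun _ => 1) = 1 := by
  rw [cfc_def]
  have : diagonal (Complex.ofReal ∘ (fun _ : ℝ => (1:ℝ)) ∘ hA.eigenvalues) =
      (1 : Matrix (Fin d) (Fin d) ℂ) := by
    simp [Function.comp_def]
  rw [this, mul_one, mul_star_self_eigen hA]

lemma cfc_add' (hA : A.IsHermitian) (f g : ℝ → ℝ) :
    hA.cfc f + hA.cfc g = hA.cfc (fun x => f x + g x) := by
  simp only [cfc_def]
  rw [← add_mul, ← mul_add]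
  congr 2
  rw [diagonal_add]
  congr 1
  funext i
  simp [Function.comp_def]

lemma cfc_herm (hA : A.IsHermitian) (f : ℝ → ℝ) : (hA.cfc f).IsHermitian := by
  rw [cfc_def]
  unfold Matrix.IsHermitian
  rw [conjTranspose_mul, conjTranspose_mul, diagonal_conjTranspose, ← star_eq_conjTranspose,
    ← star_eq_conjTranspose, star_star, mul_assoc]
  congr 2 with i
  simp [Pi.star_def, Function.comp_def]

lemma cfc_psd (hA : A.IsHermitian) (f : ℝ → ℝ)
    (hf : ∀ i, 0 ≤ f (hA.eigenvalues i)) : (hA.cfc f).PosSemidef := by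
  rw [cfc_def, star_eq_conjTranspose]
  refine Matrix.PosSemidef.mul_mul_conjTranspose_same ?_ _
  refine Matrix.PosSemidef.diagonal ?_
  intro i
  simp only [Function.comp_apply, Pi.zero_apply]
  exact_mod_cast hf i

lemma trace_cfc (hA : A.IsHermitian) (f : ℝ → ℝ) :
    (hA.cfc f).trace = ∑ i, (f (hA.eigenvalues i) : ℂ) := by
  rw [cfc_def, trace_mul_cycle, star_mul_self_eigen hA, one_mul, trace_diagonal]
  simp


/-- Anything commuting with a Hermitian matrix commutes with its functional calculus. -/
lemma commute_cfc (hA : A.IsHermitian) (f : ℝ → ℝ) {M : Matrix (Fin d) (Fin d) ℂ}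
    (hM : M * A = A * M) : M * hA.cfc f = hA.cfc f * M := by
  set V : Matrix (Fin d) (Fin d) ℂ := (hA.eigenvectorUnitary : Matrix (Fin d) (Fin d) ℂ) with hV
  set D : Matrix (Fin d) (Fin d) ℂ := diagonal (RCLike.ofReal ∘ hA.eigenvalues) with hD
  set Df : Matrix (Fin d) (Fin d) ℂ := diagonal (Complex.ofReal ∘ f ∘ hA.eigenvalues) with hDf
  have hVs : star V * V = 1 := star_mul_self_eigen hA
  have hsV : V * star V = 1 := mul_star_self_eigen hA
  have hspec : A = V * D * star V := hA.spectral_theorem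
  set N : Matrix (Fin d) (Fin d) ℂ := star V * M * V with hN
  have hAV : A * V = V * D := by
    rw [hspec, mul_assoc (V * D) (star V) V, hVs, mul_one]
  have hVA : star V * A = D * star V := by
    rw [hspec]; simp only [← mul_assoc]; rw [hVs, one_mul]
  have hVN : V * N = M * V := by
    simp only [hN, ← mul_assoc]; rw [hsV, one_mul]
  have hNsV : N * star V = star V * M := by
    simp only [hN]; rw [mul_assoc, hsV, mul_one]
  have hND : N * D = D * N := by
    calc N * D = star V * M * (V * D) := by simp only [hN, mul_assoc]
      _ = star V * M * (A * V) := by rw [hAV]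
      _ = star V * (M * A) * V := by simp only [mul_assoc]
      _ = star V * (A * M) * V := by rw [hM]
      _ = star V * A * (M * V) := by simp only [mul_assoc]
      _ = D * (star V * (M * V)) := by rw [hVA]; simp only [mul_assoc]
      _ = D * N := by simp only [hN, mul_assoc]
  have hNf : N * Df = Df * N := by
    ext i j
    have hij := congrFun (congrFun hND i) j
    simp only [hD, hDf, mul_diagonal, diagonal_mul, Function.comp_apply] at hij ⊢
    by_cases hev : hA.eigenvalues j = hA.eigenvalues i
    · rw [hev, mul_comm]
    · have h0 : N i j = 0 := by
        by_contra hN0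
        refine hev ?_
        have : (hA.eigenvalues j : ℂ) = (hA.eigenvalues i : ℂ) :=
          mul_left_cancel₀ hN0 (by
            rw [mul_comm _ (N i j)] at hij
            exact hij)
        exact_mod_cast this
      simp [h0]
  have hcfc : hA.cfc f = V * Df * star V := rfl
  calc M * hA.cfc f = V * N * Df * star V := by
        rw [hcfc]; simp only [← mul_assoc]; rw [hVN]
    _ = V * (N * Df) * star V := by simp only [mul_assoc]
    _ = V * (Df * N) * star V := by rw [hNf]
    _ = V * Df * (N * star V) := by simp only [mul_assoc]
    _ = hA.cfc f * M := by rw [hNsV, hcfc]; simp only [mul_assoc]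

lemma vecMulVec_conj (B C : Matrix (Fin d) (Fin d) ℂ) (u v : Fin d → ℂ) :
    B * vecMulVec u v * C = vecMulVec (B *ᵥ u) (v ᵥ* C) := by
  ext i j
  simp only [mul_apply, vecMulVec_apply, mulVec, vecMul, dotProduct, Finset.sum_mul,
    Finset.mul_sum]
  refine Finset.sum_congr rfl fun k _ => Finset.sum_congr rfl fun l _ => by ring

lemma mul_vecMulVec (B : Matrix (Fin d) (Fin d) ℂ) (u v : Fin d → ℂ) :
    B * vecMulVec u v = vecMulVec (B *ᵥ u) v := by
  have := vecMulVec_conj B 1 u v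
  simpa using this

lemma vecMulVec_mul_vecMulVec (u v u' v' : Fin d → ℂ) :
    vecMulVec u v * vecMulVec u' v' = (v ⬝ᵥ u') • vecMulVec u v' := by
  ext i j
  simp only [mul_apply, vecMulVec_apply, Matrix.smul_apply, dotProduct, Finset.sum_mul, smul_eq_mul,
    Finset.mul_sum]
  exact Finset.sum_congr rfl fun k _ => by ring

lemma trace_vecMulVec (u v : Fin d → ℂ) : (vecMulVec u v).trace = v ⬝ᵥ u := by
  simp [Matrix.trace, vecMulVec_apply, dotProduct, Matrix.diag, mul_comm]

lemma trace_mul_vecMulVec (M : Matrix (Fin d) (Fin d) ℂ) (u v : Fin d → ℂ) :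
    (M * vecMulVec u v).trace = v ⬝ᵥ (M *ᵥ u) := by
  rw [mul_vecMulVec, trace_vecMulVec]

lemma vecMulVec_posSemidef (v : Fin d → ℂ) : (vecMulVec v (star v)).PosSemidef := by
  rw [vecMulVec_eq (ι := Unit), ← conjTranspose_replicateCol]
  exact posSemidef_self_mul_conjTranspose _

lemma psd_smul_real {r : ℝ} (hr : 0 ≤ r) (hA : A.PosSemidef) :
    ((r : ℂ) • A).PosSemidef := by
  refine Matrix.PosSemidef.of_dotProduct_mulVec_nonneg ?_ ?_
  · show ((r : ℂ) • A)ᴴ = (r : ℂ) • A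
    rw [conjTranspose_smul, hA.1.eq, Complex.star_def, Complex.conj_ofReal]
  · intro x
    rw [smul_mulVec, dotProduct_smul, smul_eq_mul]
    exact mul_nonneg (by exact_mod_cast hr) (hA.dotProduct_mulVec_nonneg x)

lemma psd_trace_nonneg (hA : A.PosSemidef) : 0 ≤ A.trace := by
  have hid : A.trace = ∑ i, ((hA.1.eigenvalues i : ℝ) : ℂ) := by
    conv_lhs => rw [← cfc_id' hA.1]
    rw [trace_cfc]
  rw [hid]
  refine Finset.sum_nonneg fun i _ => ?_
  exact_mod_cast hA.eigenvalues_nonneg i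

lemma trace_mul_psd_nonneg {B : Matrix (Fin d) (Fin d) ℂ} (hA : A.PosSemidef)
    (hB : B.PosSemidef) : 0 ≤ (A * B).trace := by
  set s := hB.1.cfc (fun x => Real.sqrt x) with hs
  have hss : s * s = B := by
    rw [hs, cfc_mul' hB.1, cfc_congr' hB.1 (g := fun x => x)
      (fun i => Real.mul_self_sqrt (hB.eigenvalues_nonneg i)), cfc_id']
  have h : A * B = A * s * s := by rw [mul_assoc, hss]
  rw [h, trace_mul_cycle]
  have h2 : s * A * s = s * A * sᴴ := by
    rw [(cfc_herm hB.1 _).eq]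
  rw [h2]
  exact psd_trace_nonneg (hA.mul_mul_conjTranspose_same s)


lemma cs_dotProduct (a b : Fin d → ℂ) :
    Complex.normSq (star a ⬝ᵥ b) ≤ (star a ⬝ᵥ a).re * (star b ⬝ᵥ b).re := by
  set x : EuclideanSpace ℂ (Fin d) := (WithLp.equiv 2 _).symm a
  set y : EuclideanSpace ℂ (Fin d) := (WithLp.equiv 2 _).symm b
  have h1 : (inner ℂ x y : ℂ) = star a ⬝ᵥ b := by rw [dotProduct_comm]; rfl
  have h2 : (inner ℂ x x : ℂ) = star a ⬝ᵥ a := by rw [dotProduct_comm]; rfl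
  have h3 : (inner ℂ y y : ℂ) = star b ⬝ᵥ b := by rw [dotProduct_comm]; rfl
  have hcs := norm_inner_le_norm (𝕜 := ℂ) x y
  have hx : ‖x‖ ^ 2 = (inner ℂ x x : ℂ).re := by
    rw [← @inner_self_eq_norm_sq ℂ]; rfl
  have hy : ‖y‖ ^ 2 = (inner ℂ y y : ℂ).re := by
    rw [← @inner_self_eq_norm_sq ℂ]; rfl
  have : Complex.normSq (inner ℂ x y : ℂ) ≤ (inner ℂ x x : ℂ).re * (inner ℂ y y : ℂ).re := by
    rw [← hx, ← hy, Complex.normSq_eq_norm_sq]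
    calc ‖(inner ℂ x y : ℂ)‖ ^ 2 ≤ (‖x‖ * ‖y‖) ^ 2 := by
          refine pow_le_pow_left₀ (by positivity) ?_ 2
          exact_mod_cast hcs
      _ = ‖x‖ ^ 2 * ‖y‖ ^ 2 := by ring
  rw [h1, h2, h3] at this
  exact this

/-- A nonnegative complex number equals the coercion of its real part. -/
lemma nonneg_complex_eq_re {z : ℂ} (hz : 0 ≤ z) : z = (z.re : ℂ) := by
  obtain ⟨h1, h2⟩ := Complex.nonneg_iff.mp hz
  exact Complex.ext rfl (by simpa using h2.symm)


lemma cfc_zero' (hA : A.IsHermitian) : hA.cfc (fun _ => 0) = 0 := by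
  rw [cfc_def]
  have : diagonal (Complex.ofReal ∘ (fun _ : ℝ => (0:ℝ)) ∘ hA.eigenvalues) =
      (0 : Matrix (Fin d) (Fin d) ℂ) := by simp [Function.comp_def]
  rw [this, mul_zero, zero_mul]

lemma herm_smul_real (r : ℝ) (hA : A.IsHermitian) : ((r : ℂ) • A).IsHermitian := by
  show ((r : ℂ) • A)ᴴ = (r : ℂ) • A
  rw [conjTranspose_smul, hA.eq, Complex.star_def, Complex.conj_ofReal]

lemma vecMulVec_mulVec' (u v x : Fin d → ℂ) :
    vecMulVec u v *ᵥ x = (v ⬝ᵥ x) • u := by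
  ext i
  simp only [mulVec, vecMulVec_apply, dotProduct, Pi.smul_apply, smul_eq_mul, Finset.sum_mul,
    Finset.mul_sum]
  exact Finset.sum_congr rfl fun k _ => by ring

end PGMAux

end PGMAuxSection

open PGMAux Matrix in
/-- For a pure-state GU ensemble the PGM is optimal: the optimal success probability equals
`(1/n)[tr(ρ̄^{1/2})]²`, and `K = (1/n)tr(ρ̄^{1/2})·ρ̄^{1/2}` is dual feasible with this trace. -/
theorem pgm_optimal_pure_GU
    {G : Type*} [Group G] [Fintype G] (d : ℕ) (hd : 0 < d)
    (π : G →* Matrix.unitaryGroup (Fin d) ℂ)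
    (ψ : Fin d → ℂ) (hψ : dotProduct (star ψ) ψ = 1)
    (ψg : G → Matrix (Fin d) (Fin d) ℂ)
    (hψg : ∀ g, ψg g = (π g : Matrix (Fin d) (Fin d) ℂ) *
        Matrix.vecMulVec ψ (star ψ) * star (π g : Matrix (Fin d) (Fin d) ℂ))
    (ρbar : Matrix (Fin d) (Fin d) ℂ)
    (hρbar : ρbar = (1 / (Fintype.card G : ℂ)) • ∑ g : G, ψg g)
    (K : Matrix (Fin d) (Fin d) ℂ)
    (hK : K = ((1 / (Fintype.card G : ℂ)) * (mpow ρbar (1/2)).trace) • mpow ρbar (1/2)) :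
    optSucc (fun _ : G => 1 / (Fintype.card G : ℝ)) ψg
        = (1 / (Fintype.card G : ℝ)) * ((mpow ρbar (1/2)).trace.re) ^ 2 ∧
    (∀ g : G, (K - (1 / (Fintype.card G : ℂ)) • ψg g).PosSemidef) ∧
    K.trace.re = (1 / (Fintype.card G : ℝ)) * ((mpow ρbar (1/2)).trace.re) ^ 2 := by
  classical
  have hn0 : 0 < Fintype.card G := Fintype.card_pos
  set n : ℕ := Fintype.card G with hn
  have hnR : (n : ℝ) ≠ 0 := Nat.cast_ne_zero.mpr hn0.ne'
  have hnC : (n : ℂ) ≠ 0 := Nat.cast_ne_zero.mpr hn0.ne'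
  have hcast : (1 / (n : ℂ)) = (((1 / n : ℝ)) : ℂ) := by push_cast; ring
  have hninv : 0 ≤ (1 / n : ℝ) := by positivity
  set V : G → Matrix (Fin d) (Fin d) ℂ := fun g => (π g : Matrix (Fin d) (Fin d) ℂ) with hV
  have hVsm : ∀ g, star (V g) * V g = 1 := fun g => Unitary.star_mul_self_of_mem (π g).2
  have hVms : ∀ g, V g * star (V g) = 1 := fun g => Unitary.mul_star_self_of_mem (π g).2
  have hVmul : ∀ g h : G, V g * V h = V (g * h) := by
    intro g h
    exact (congrArg Subtype.val (π.map_mul g h)).symm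
  set φ : G → (Fin d → ℂ) := fun g => V g *ᵥ ψ with hφdef
  have hψg' : ∀ g, ψg g = V g * vecMulVec ψ (star ψ) * star (V g) := hψg
  have hφ : ∀ g, ψg g = vecMulVec (φ g) (star (φ g)) := by
    intro g
    have hsφ : star (φ g) = star ψ ᵥ* star (V g) := by
      show star (V g *ᵥ ψ) = star ψ ᵥ* star (V g)
      rw [star_mulVec]
      rfl
    rw [hψg' g, vecMulVec_conj, hsφ]
  have hψgPSD : ∀ g, (ψg g).PosSemidef := fun g => (hφ g) ▸ vecMulVec_posSemidef (φ g)
  -- ρbar is PSD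
  have hsumPSD : (∑ g : G, ψg g).PosSemidef :=
    Finset.sum_induction ψg Matrix.PosSemidef (fun a b ha hb => ha.add hb)
      Matrix.PosSemidef.zero (fun g _ => hψgPSD g)
  have hρPSD : ρbar.PosSemidef := by
    rw [hρbar, hcast]
    exact psd_smul_real hninv hsumPSD
  have hρH : ρbar.IsHermitian := hρPSD.1
  have hsum : ∑ g : G, ψg g = (n : ℂ) • ρbar := by
    rw [hρbar, smul_smul, mul_one_div, div_self hnC, one_smul]
  have hev : ∀ i, 0 ≤ hρH.eigenvalues i := hρPSD.eigenvalues_nonneg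
  -- functional calculus players
  set S : Matrix (Fin d) (Fin d) ℂ := hρH.cfc (fun x => x ^ ((1:ℝ)/2)) with hSdef
  set T : Matrix (Fin d) (Fin d) ℂ := hρH.cfc (fun x => x ^ (-((1:ℝ)/2))) with hTdef
  set R : Matrix (Fin d) (Fin d) ℂ := hρH.cfc (fun x => x ^ ((1:ℝ)/4)) with hRdef
  set Pp : Matrix (Fin d) (Fin d) ℂ := hρH.cfc (fun x => if x = 0 then 0 else 1) with hPdef
  set Q : Matrix (Fin d) (Fin d) ℂ := hρH.cfc (fun x => if x = 0 then 1 else 0) with hQdef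
  have hmpow : mpow ρbar (1/2) = S := by
    rw [mpow, dif_pos hρH]
  have hSH : S.IsHermitian := cfc_herm hρH _
  have hTH : T.IsHermitian := cfc_herm hρH _
  have hRH : R.IsHermitian := cfc_herm hρH _
  have hQH : Q.IsHermitian := cfc_herm hρH _
  have hSPSD : S.PosSemidef := cfc_psd hρH _ fun i => Real.rpow_nonneg (hev i) _
  have hQPSD : Q.PosSemidef := cfc_psd hρH _ fun i => by positivity
  -- multiplicative identities
  have hSS : S * S = ρbar := by
    rw [hSdef, cfc_mul' hρH]
    rw [cfc_congr' hρH (g := fun x => x) ?_, cfc_id' hρH]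
    intro i
    rcases eq_or_lt_of_le (hev i) with h | h
    · rw [← h]
      norm_num [Real.zero_rpow]
    · rw [← Real.rpow_add h]
      norm_num
  have hRR : R * R = S := by
    rw [hRdef, hSdef, cfc_mul' hρH]
    refine cfc_congr' hρH fun i => ?_
    rcases eq_or_lt_of_le (hev i) with h | h
    · rw [← h]
      norm_num [Real.zero_rpow]
    · rw [← Real.rpow_add h]
      norm_num
  have hTρ : T * ρbar = S := by
    have h1 := cfc_mul' hρH (fun x => x ^ (-((1:ℝ)/2))) (fun x => x)
    rw [cfc_id' hρH] at h1
    rw [hTdef, h1, hSdef]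
    refine cfc_congr' hρH fun i => ?_
    rcases eq_or_lt_of_le (hev i) with h | h
    · rw [← h]
      norm_num [Real.zero_rpow]
    · nth_rewrite 2 [← Real.rpow_one (hρH.eigenvalues i)]
      rw [← Real.rpow_add h]
      norm_num
  have hST : S * T = Pp := by
    rw [hSdef, hTdef, cfc_mul' hρH, hPdef]
    refine cfc_congr' hρH fun i => ?_
    rcases eq_or_lt_of_le (hev i) with h | h
    · rw [← h]
      norm_num [Real.zero_rpow]
    · rw [← Real.rpow_add h, if_neg h.ne']
      norm_num
  have hTS : T * S = Pp := by
    rw [hSdef, hTdef, cfc_mul' hρH, hPdef]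
    refine cfc_congr' hρH fun i => ?_
    rcases eq_or_lt_of_le (hev i) with h | h
    · rw [← h]
      norm_num [Real.zero_rpow]
    · rw [← Real.rpow_add h, if_neg h.ne']
      norm_num
  have hPQ : Pp + Q = 1 := by
    rw [hPdef, hQdef, cfc_add' hρH]
    rw [cfc_congr' hρH (g := fun _ => 1) ?_, cfc_one' hρH]
    intro i
    by_cases h : hρH.eigenvalues i = 0 <;> simp [h]
  have hQρ : Q * ρbar = 0 := by
    have h1 := cfc_mul' hρH (fun x => if x = 0 then 1 else 0) (fun x => x)
    rw [cfc_id' hρH] at h1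
    rw [hQdef, h1]
    rw [cfc_congr' hρH (g := fun _ => 0) ?_, cfc_zero' hρH]
    intro i
    by_cases h : hρH.eigenvalues i = 0 <;> simp [h]
  have hQQ : Q * Q = Q := by
    rw [hQdef, cfc_mul' hρH]
    refine cfc_congr' hρH fun i => ?_
    by_cases h : hρH.eigenvalues i = 0 <;> simp [h]
  have hPT : Pp * T = T := by
    rw [hPdef, hTdef, cfc_mul' hρH]
    refine cfc_congr' hρH fun i => ?_
    rcases eq_or_lt_of_le (hev i) with h | h
    · rw [← h]
      norm_num [Real.zero_rpow]
    · rw [if_neg h.ne', one_mul]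
  -- the trace of S
  set tr : ℝ := ∑ i, (hρH.eigenvalues i) ^ ((1:ℝ)/2) with htrdef
  have htr0 : 0 ≤ tr :=
    Finset.sum_nonneg fun i _ => Real.rpow_nonneg (hev i) _
  have htS : S.trace = ((tr : ℝ) : ℂ) := by
    rw [hSdef, trace_cfc, htrdef]
    push_cast
    rfl
  -- invariance
  have hinv : ∀ g, V g * ρbar = ρbar * V g := by
    intro g
    have hconj : ∀ h : G, V g * ψg h * star (V g) = ψg (g * h) := by
      intro h
      rw [hψg' h, hψg' (g * h), ← hVmul g h]
      rw [show star (V g * V h) = star (V h) * star (V g) from StarMul.star_mul _ _]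
      simp only [mul_assoc]
    have hsumconj : V g * (∑ h : G, ψg h) * star (V g) = ∑ h : G, ψg h := by
      rw [Finset.mul_sum, Finset.sum_mul]
      rw [show (∑ h : G, V g * ψg h * star (V g)) = ∑ h : G, ψg (g * h) from
        Finset.sum_congr rfl fun h _ => hconj h]
      exact Fintype.sum_equiv (Equiv.mulLeft g) _ _ fun h => rfl
    have hρconj : V g * ρbar * star (V g) = ρbar := by
      rw [hρbar, mul_smul_comm, smul_mul_assoc, hsumconj]
    calc V g * ρbar = V g * ρbar * (star (V g) * V g) := by rw [hVsm, mul_one]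
      _ = (V g * ρbar * star (V g)) * V g := by simp only [mul_assoc]
      _ = ρbar * V g := by rw [hρconj]
  have hTcomm : ∀ g, V g * T = T * V g := fun g => commute_cfc hρH _ (hinv g)
  -- the key scalar: ⟨φ g, T φ g⟩ = tr S for every g
  have htrace_T_ψg : ∀ g, (T * ψg g).trace = (T * vecMulVec ψ (star ψ)).trace := by
    intro g
    rw [hψg' g]
    calc (T * (V g * vecMulVec ψ (star ψ) * star (V g))).trace
        = ((T * V g) * (vecMulVec ψ (star ψ) * star (V g))).trace := by
          simp only [mul_assoc]
      _ = ((V g * T) * (vecMulVec ψ (star ψ) * star (V g))).trace := by rw [← hTcomm g]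
      _ = ((T * (vecMulVec ψ (star ψ) * star (V g))) * V g).trace := by
          rw [mul_assoc, trace_mul_comm]
      _ = (T * vecMulVec ψ (star ψ) * (star (V g) * V g)).trace := by simp only [mul_assoc]
      _ = (T * vecMulVec ψ (star ψ)).trace := by rw [hVsm, mul_one]
  have htrace_TO : (T * vecMulVec ψ (star ψ)).trace = S.trace := by
    have h1 : ∑ g : G, (T * ψg g).trace = (n : ℂ) * S.trace := by
      rw [← trace_sum, ← Finset.mul_sum, hsum, mul_smul_comm, trace_smul, smul_eq_mul, hTρ]
    have h2 : ∑ g : G, (T * ψg g).trace = (n : ℂ) * (T * vecMulVec ψ (star ψ)).trace := by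
      rw [Finset.sum_congr rfl fun g _ => htrace_T_ψg g, Finset.sum_const, Finset.card_univ,
        nsmul_eq_mul]
    have := h2.symm.trans h1
    exact mul_left_cancel₀ hnC this
  have haT : ∀ g, star (φ g) ⬝ᵥ (T *ᵥ φ g) = S.trace := by
    intro g
    rw [← trace_mul_vecMulVec T (φ g) (star (φ g)), ← hφ g, htrace_T_ψg g, htrace_TO]
  -- Q kills each φ g
  have hQψg : ∀ g, (Q * ψg g).trace = 0 := by
    have hsum0 : ∑ g : G, (Q * ψg g).trace = 0 := by
      rw [← trace_sum, ← Finset.mul_sum, hsum, mul_smul_comm, hQρ, smul_zero, trace_zero]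
    have hnonneg : ∀ g ∈ Finset.univ, 0 ≤ (Q * ψg g).trace := fun g _ =>
      trace_mul_psd_nonneg hQPSD (hψgPSD g)
    intro g
    exact (Finset.sum_eq_zero_iff_of_nonneg hnonneg).mp hsum0 g (Finset.mem_univ g)
  have hQφ : ∀ g, Q *ᵥ φ g = 0 := by
    intro g
    rw [← dotProduct_star_self_eq_zero (v := Q *ᵥ φ g)]
    rw [star_mulVec, hQH.eq]
    rw [← dotProduct_mulVec (star (φ g)) Q (Q *ᵥ φ g), mulVec_mulVec, hQQ]
    rw [← trace_mul_vecMulVec Q (φ g) (star (φ g)), ← hφ g]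
    exact hQψg g
  have hPφ : ∀ g, Pp *ᵥ φ g = φ g := by
    intro g
    have h1 : Pp = 1 - Q := by rw [← hPQ]; abel
    rw [h1, sub_mulVec, one_mulVec, hQφ g, sub_zero]
  -- dual feasibility core
  have hfeas : ∀ g, (((tr : ℝ) : ℂ) • S - ψg g).PosSemidef := by
    intro g
    refine Matrix.PosSemidef.of_dotProduct_mulVec_nonneg ?_ ?_
    · exact (herm_smul_real tr hSH).sub (hψgPSD g).1
    · intro x
      set w : Fin d → ℂ := T *ᵥ φ g with hw
      have hSw : S *ᵥ w = φ g := by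
        rw [hw, mulVec_mulVec, hST, hPφ g]
      have hsw : star w = star (φ g) ᵥ* T := by
        rw [hw, star_mulVec, hTH.eq]
      have hwSw : star w ⬝ᵥ (S *ᵥ w) = ((tr : ℝ) : ℂ) := by
        rw [hSw, hsw, ← dotProduct_mulVec, haT g, htS]
      have hRx : star (R *ᵥ x) ⬝ᵥ (R *ᵥ x) = star x ⬝ᵥ (S *ᵥ x) := by
        rw [star_mulVec, hRH.eq, ← dotProduct_mulVec, mulVec_mulVec, hRR]
      have hRw : star (R *ᵥ w) ⬝ᵥ (R *ᵥ w) = ((tr : ℝ) : ℂ) := by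
        rw [star_mulVec, hRH.eq, ← dotProduct_mulVec, mulVec_mulVec, hRR]
        exact hwSw
      have hcRx : star (R *ᵥ x) ⬝ᵥ (R *ᵥ w) = star x ⬝ᵥ φ g := by
        rw [star_mulVec, hRH.eq, ← dotProduct_mulVec, mulVec_mulVec, hRR, hSw]
      have hCS := cs_dotProduct (R *ᵥ x) (R *ᵥ w)
      rw [hcRx, hRx, hRw] at hCS
      simp only [Complex.ofReal_re] at hCS
      have hα : 0 ≤ star x ⬝ᵥ (S *ᵥ x) := hSPSD.dotProduct_mulVec_nonneg x
      have hexp : star x ⬝ᵥ ((((tr : ℝ) : ℂ) • S - ψg g) *ᵥ x)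
          = ((tr : ℝ) : ℂ) * (star x ⬝ᵥ (S *ᵥ x)) - (star (φ g) ⬝ᵥ x) * (star x ⬝ᵥ φ g) := by
        rw [sub_mulVec, dotProduct_sub, smul_mulVec, dotProduct_smul, smul_eq_mul, hφ g,
          vecMulVec_mulVec', dotProduct_smul, smul_eq_mul]
      rw [hexp]
      have hconj : star (φ g) ⬝ᵥ x = star (star x ⬝ᵥ φ g) := star_dotProduct _ _
      rw [hconj]
      set c : ℂ := star x ⬝ᵥ φ g with hc
      set α : ℂ := star x ⬝ᵥ (S *ᵥ x) with hα2
      have hαre : α = ((α.re : ℝ) : ℂ) := nonneg_complex_eq_re hα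
      have h1 : star c * c = ((Complex.normSq c : ℝ) : ℂ) := by
        rw [Complex.star_def, mul_comm, Complex.mul_conj]
      rw [h1, hαre]
      rw [show ((tr : ℝ) : ℂ) * ((α.re : ℝ) : ℂ) - ((Complex.normSq c : ℝ) : ℂ)
          = (((tr * α.re - Complex.normSq c : ℝ)) : ℂ) by push_cast; ring]
      have hre0 : (0:ℝ) ≤ tr * α.re - Complex.normSq c := by nlinarith [hCS]
      exact_mod_cast hre0
  -- dual feasibility, packaged
  have hfeasK : ∀ g, (K - (1 / (n : ℂ)) • ψg g).PosSemidef := by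
    intro g
    have hKr : K - (1 / (n : ℂ)) • ψg g = (1 / (n : ℂ)) • (((tr : ℝ) : ℂ) • S - ψg g) := by
      rw [hK, hmpow, htS, smul_sub, smul_smul]
    rw [hKr, hcast]
    exact psd_smul_real hninv (hfeas g)
  -- trace of K
  have hKtr : K.trace = ((((1 / (n : ℝ)) * tr ^ 2 : ℝ)) : ℂ) := by
    rw [hK, hmpow, trace_smul, htS, smul_eq_mul, hcast]
    push_cast
    ring
  have hKtrre : K.trace.re = (1 / (n : ℝ)) * tr ^ 2 := by
    rw [hKtr, Complex.ofReal_re]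
  -- the optimal value
  set x₀ : ℝ := (1 / (n : ℝ)) * tr ^ 2 with hx₀
  set Sset : Set ℝ := {x : ℝ | ∃ M : G → Matrix (Fin d) (Fin d) ℂ,
      (∀ i, (M i).PosSemidef) ∧ (∑ i, M i) = 1 ∧
      x = ∑ i, (fun _ : G => 1 / (Fintype.card G : ℝ)) i * ((M i * ψg i).trace).re} with hSset
  have hopt : optSucc (fun _ : G => 1 / (Fintype.card G : ℝ)) ψg = sSup Sset := rfl
  -- upper bound
  have hub : ∀ x ∈ Sset, x ≤ x₀ := by
    rintro x ⟨M, hMpsd, hMsum, rfl⟩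
    have hle : ∀ g : G, (1 / (n : ℝ)) * ((M g * ψg g).trace).re ≤ ((M g * K).trace).re := by
      intro g
      have h0 : 0 ≤ ((M g * (K - (1 / (n : ℂ)) • ψg g)).trace) :=
        trace_mul_psd_nonneg (hMpsd g) (hfeasK g)
      have hexp : M g * (K - (1 / (n : ℂ)) • ψg g) = M g * K - (1 / (n : ℂ)) • (M g * ψg g) := by
        rw [mul_sub, mul_smul_comm]
      rw [hexp, trace_sub, trace_smul, smul_eq_mul] at h0
      have h2 := (Complex.nonneg_iff.mp h0).1
      rw [Complex.sub_re, hcast, Complex.re_ofReal_mul] at h2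
      linarith
    calc ∑ g : G, (fun _ : G => 1 / (Fintype.card G : ℝ)) g * ((M g * ψg g).trace).re
        = ∑ g : G, (1 / (n : ℝ)) * ((M g * ψg g).trace).re := rfl
      _ ≤ ∑ g : G, ((M g * K).trace).re := Finset.sum_le_sum fun g _ => hle g
      _ = (((∑ g : G, M g) * K).trace).re := by
          rw [← Complex.re_sum, ← trace_sum, ← Finset.sum_mul]
      _ = x₀ := by rw [hMsum, one_mul, hKtrre]
  -- the PGM measurement achieves x₀
  set M₀ : G → Matrix (Fin d) (Fin d) ℂ :=
    fun g => (1 / (n : ℂ)) • (T * ψg g * T) + (if g = 1 then Q else 0) with hM₀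
  have hM₀psd : ∀ g, (M₀ g).PosSemidef := by
    intro g
    show ((1 / (n : ℂ)) • (T * ψg g * T) + (if g = 1 then Q else 0)).PosSemidef
    have h1 : (T * ψg g * T).PosSemidef := by
      have := (hψgPSD g).mul_mul_conjTranspose_same T
      rwa [hTH.eq] at this
    have h2 : ((1 / (n : ℂ)) • (T * ψg g * T)).PosSemidef := by
      rw [hcast]; exact psd_smul_real hninv h1
    refine h2.add ?_
    split
    · exact hQPSD
    · exact Matrix.PosSemidef.zero
  have hM₀sum : ∑ g : G, M₀ g = 1 := by
    have h2 : ∑ g : G, (T * ψg g * T) = T * (∑ g : G, ψg g) * T := by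
      calc ∑ g : G, T * ψg g * T = ∑ g : G, T * (ψg g * T) := by simp only [mul_assoc]
        _ = T * ∑ g : G, (ψg g * T) := by rw [Finset.mul_sum]
        _ = T * ((∑ g : G, ψg g) * T) := by rw [Finset.sum_mul]
        _ = T * (∑ g : G, ψg g) * T := by rw [mul_assoc]
    have h1 : ∑ g : G, ((1 / (n : ℂ)) • (T * ψg g * T)) = Pp := by
      rw [← Finset.smul_sum, h2, hsum, mul_smul_comm, smul_mul_assoc, hTρ, hST, smul_smul,
        one_div_mul_cancel hnC, one_smul]
    have hite : ∑ g : G, (if g = 1 then Q else (0 : Matrix (Fin d) (Fin d) ℂ)) = Q := by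
      simp
    calc ∑ g : G, M₀ g
        = ∑ g : G, ((1 / (n : ℂ)) • (T * ψg g * T) + (if g = 1 then Q else 0)) := rfl
      _ = (∑ g : G, (1 / (n : ℂ)) • (T * ψg g * T))
            + ∑ g : G, (if g = 1 then Q else (0 : Matrix (Fin d) (Fin d) ℂ)) :=
          Finset.sum_add_distrib
      _ = Pp + Q := by rw [h1, hite]
      _ = 1 := hPQ
  have htrM₀ : ∀ g : G, ((M₀ g) * ψg g).trace = (1 / (n : ℂ)) * (((tr : ℝ) : ℂ) * ((tr : ℝ) : ℂ)) := by
    intro g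
    have e1 : T * vecMulVec (φ g) (star (φ g)) = vecMulVec (T *ᵥ φ g) (star (φ g)) :=
      PGMAux.mul_vecMulVec T _ _
    have hTT : (T * ψg g * T * ψg g).trace = ((tr : ℝ) : ℂ) * ((tr : ℝ) : ℂ) := by
      rw [hφ g]
      calc (T * vecMulVec (φ g) (star (φ g)) * T * vecMulVec (φ g) (star (φ g))).trace
          = ((T * vecMulVec (φ g) (star (φ g))) * (T * vecMulVec (φ g) (star (φ g)))).trace := by
            simp only [mul_assoc]
        _ = ((vecMulVec (T *ᵥ φ g) (star (φ g))) * (vecMulVec (T *ᵥ φ g) (star (φ g)))).trace := by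
            rw [e1]
        _ = ((star (φ g) ⬝ᵥ (T *ᵥ φ g)) • vecMulVec (T *ᵥ φ g) (star (φ g))).trace := by
            rw [PGMAux.vecMulVec_mul_vecMulVec]
        _ = (star (φ g) ⬝ᵥ (T *ᵥ φ g)) * (star (φ g) ⬝ᵥ (T *ᵥ φ g)) := by
            rw [trace_smul, smul_eq_mul, trace_vecMulVec]
        _ = ((tr : ℝ) : ℂ) * ((tr : ℝ) : ℂ) := by rw [haT g, htS]
    have hsplit : M₀ g * ψg g
        = (1 / (n : ℂ)) • (T * ψg g * T * ψg g) + (if g = 1 then Q * ψg g else 0) := by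
      show ((1 / (n : ℂ)) • (T * ψg g * T) + (if g = 1 then Q else 0)) * ψg g = _
      rw [add_mul, smul_mul_assoc, ite_mul, zero_mul]
    rw [hsplit, trace_add, trace_smul, smul_eq_mul, hTT]
    by_cases hg : g = 1
    · rw [if_pos hg, hg, hQψg 1, add_zero]
    · rw [if_neg hg, trace_zero, add_zero]
  have hmem : x₀ ∈ Sset := by
    refine ⟨M₀, hM₀psd, hM₀sum, ?_⟩
    have hterm : ∀ g : G, (1 / (n : ℝ)) * ((M₀ g * ψg g).trace).re
        = (1 / (n : ℝ)) * ((1 / (n : ℝ)) * tr ^ 2) := by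
      intro g
      rw [htrM₀ g, hcast]
      rw [show ((tr : ℝ) : ℂ) * ((tr : ℝ) : ℂ) = (((tr ^ 2 : ℝ)) : ℂ) by push_cast; ring]
      rw [Complex.re_ofReal_mul, Complex.ofReal_re]
    show x₀ = ∑ g : G, (1 / (n : ℝ)) * ((M₀ g * ψg g).trace).re
    rw [Finset.sum_congr rfl fun g _ => hterm g, Finset.sum_const, Finset.card_univ,
      nsmul_eq_mul]
    rw [hx₀]
    field_simp
    ring
  have hSup : sSup Sset = x₀ :=
    le_antisymm (csSup_le ⟨x₀, hmem⟩ hub) (le_csSup ⟨x₀, hub⟩ hmem)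
  have hre : (mpow ρbar (1/2)).trace.re = tr := by
    rw [hmpow, htS, Complex.ofReal_re]
  refine ⟨?_, hfeasK, ?_⟩
  · rw [hopt, hSup, hre]
  · rw [hre]
    exact hKtrre
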